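/- Let G be a graph with a k-way partition S_1, …, S_k achieving ρ_G(k), let Υ_G(k) = Ω(k), and let H be a cluster-preserving sparsifier of G. Let f_1, …, f_k be the eigenvectors of 𝓛_H corresponding to its k smallest eigenvalues, and for each i let ḡ_i = D_H^{1/2}χ_{S_i} / ‖D_H^{1/2}χ_{S_i}‖, where χ_{S_i} is the 0/1 indicator vector of S_i. Then for every i ∈ {1,…,k} there exists a vector f̂_i that is a linear combination of f_1, …, f_k such that ‖ḡ_i − f̂_i‖² = O(k / Υ_G(k)). -/

import Mathlib

open scoped BigOperators Classical
open Finset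

/-- An undirected weighted graph on a finite vertex set `V`, given by a symmetric
non-negative weight function. -/
structure WGraph (V : Type) [Fintype V] where
  w : V → V → ℝ
  symm : ∀ u v, w u v = w v u
  nonneg : ∀ u v, 0 ≤ w u v

namespace WGraph

variable {V : Type} [Fintype V]

/-- Degree of a vertex: `deg_G(u) = ∑_v w(u,v)`. -/
noncomputable def deg (G : WGraph V) (u : V) : ℝ := ∑ v, G.w u v

/-- Volume of a vertex set: `vol_G(S) = ∑_{u ∈ S} deg_G(u)`. -/
noncomputable def vol (G : WGraph V) (S : Finset V) : ℝ := ∑ u ∈ S, G.deg u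

/-- Cut value between two vertex sets. -/
noncomputable def cut (G : WGraph V) (S T : Finset V) : ℝ := ∑ u ∈ S, ∑ v ∈ T, G.w u v

/-- Conductance `Φ_G(S)`, with `Φ_G(∅) = 1`. -/
noncomputable def conductance [DecidableEq V] (G : WGraph V) (S : Finset V) : ℝ :=
  if S = (∅ : Finset V) then 1 else G.cut S Sᶜ / min (G.vol S) (G.vol Sᶜ)

/-- `A : Fin k → Finset V` is a partition of `V` into `k` non-empty sets. -/
def IsKPartition [DecidableEq V] (k : ℕ) (A : Fin k → Finset V) : Prop :=
  (∀ i, (A i).Nonempty) ∧ (∀ i j, i ≠ j → Disjoint (A i) (A j)) ∧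
    Finset.univ.biUnion A = (Finset.univ : Finset V)

/-- The `k`-way expansion `ρ_G(k)`. -/
noncomputable def rho [DecidableEq V] (G : WGraph V) (k : ℕ) : ℝ :=
  sInf {r : ℝ | ∃ A : Fin k → Finset V, IsKPartition k A ∧ r = ⨆ i, G.conductance (A i)}

/-- The normalised Laplacian `𝓛_G = I - D^{-1/2} A D^{-1/2}`. -/
noncomputable def normLap [DecidableEq V] (G : WGraph V) : Matrix V V ℝ :=
  1 - (Matrix.diagonal fun u => (Real.sqrt (G.deg u))⁻¹) * (Matrix.of G.w) *
      (Matrix.diagonal fun u => (Real.sqrt (G.deg u))⁻¹)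

/-- `lam G i` is the `i`-th smallest eigenvalue (1-based, with multiplicity) of the
normalised Laplacian of `G`, obtained by sorting the roots of its characteristic
polynomial. -/
noncomputable def lam [DecidableEq V] (G : WGraph V) (i : ℕ) : ℝ :=
  (Multiset.sort G.normLap.charpoly.roots (· ≤ ·)).getD (i - 1) 0

/-- `Υ_G(k) = λ_{k+1}(𝓛_G) / ρ_G(k)`. -/
noncomputable def upsilon [DecidableEq V] (G : WGraph V) (k : ℕ) : ℝ := G.lam (k + 1) / G.rho k

/-- `S` is a `k`-way partition achieving the `k`-way expansion `ρ_G(k)`. -/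
def AchievesRho [DecidableEq V] (G : WGraph V) (k : ℕ) (S : Fin k → Finset V) : Prop :=
  IsKPartition k S ∧ (⨆ i, G.conductance (S i)) = G.rho k

/-- `H` is a cluster-preserving sparsifier of `G` (w.r.t. the optimal clusters `S`),
with explicit constants `c₁` (for `Φ_H(S_i) = O(k ⬝ Φ_G(S_i))`) and
`c₂` (for `λ_{k+1}(𝓛_H) = Ω(λ_{k+1}(𝓛_G))`). -/
def IsCPS [DecidableEq V] (G H : WGraph V) (k : ℕ) (S : Fin k → Finset V)
    (c₁ c₂ : ℝ) : Prop :=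
  (∀ i, H.conductance (S i) ≤ c₁ * k * G.conductance (S i)) ∧
    c₂ * G.lam (k + 1) ≤ H.lam (k + 1)

/-- Squared Euclidean norm of a vector indexed by `V`. -/
noncomputable def sqNorm (x : V → ℝ) : ℝ := ∑ u, x u ^ 2

/-- The normalised indicator vector `ḡ_S = D_H^{1/2} χ_S / ‖D_H^{1/2} χ_S‖`. -/
noncomputable def indVec (H : WGraph V) (S : Finset V) : V → ℝ := fun u =>
  (if u ∈ S then Real.sqrt (H.deg u) else 0) /
    Real.sqrt (sqNorm fun v => if v ∈ S then Real.sqrt (H.deg v) else 0)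

/-- `f` is a family of orthonormal eigenvectors of `𝓛_H` corresponding to its `k`
smallest eigenvalues. -/
def IsBottomEigenvectors [DecidableEq V] (H : WGraph V) (k : ℕ) (f : Fin k → V → ℝ) : Prop :=
  (∀ i : Fin k, H.normLap.mulVec (f i) = H.lam (i.1 + 1) • f i) ∧
    (∀ i, ∑ u, f i u ^ 2 = 1) ∧ ∀ i j, i ≠ j → ∑ u, f i u * f j u = 0

/-- The spectral embedding `F(u) = (f_1(u), …, f_k(u)) / √(deg_H(u))`. -/
noncomputable def spectralEmbed (H : WGraph V) (k : ℕ) (f : Fin k → V → ℝ) (u : V) :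
    Fin k → ℝ := fun i => f i u / Real.sqrt (H.deg u)

/-- `A` is a partition of `V` into `k` (possibly empty) sets. -/
def IsCover [DecidableEq V] (k : ℕ) (A : Fin k → Finset V) : Prop :=
  (∀ i j, i ≠ j → Disjoint (A i) (A j)) ∧ Finset.univ.biUnion A = (Finset.univ : Finset V)

/-- The `k`-means cost of a partition `A` with centres `c` for embedded points `F`. -/
noncomputable def kmeansCost (k : ℕ) (F : V → Fin k → ℝ) (A : Fin k → Finset V)
    (c : Fin k → Fin k → ℝ) : ℝ :=
  ∑ i, ∑ u ∈ A i, ∑ j, (F u j - c i j) ^ 2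

/-- `P` is an output of spectral clustering on `H` with parameter `k`: it is an optimal
`k`-means clustering of the spectral embedding given by bottom-`k` orthonormal
eigenvectors of `𝓛_H`. -/
def IsSpectralClustering [DecidableEq V] (H : WGraph V) (k : ℕ) (P : Fin k → Finset V) : Prop :=
  ∃ f, IsBottomEigenvectors H k f ∧ IsCover k P ∧
    ∃ c, ∀ (Q : Fin k → Finset V) (d : Fin k → Fin k → ℝ), IsCover k Q →
      kmeansCost k (spectralEmbed H k f) P c ≤ kmeansCost k (spectralEmbed H k f) Q d

/-- Contraction of a graph along a map `π : V → W`: the weight between `a b : W` is the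
total weight between the fibres `π⁻¹(a)` and `π⁻¹(b)` (so self-loops are kept and
`deg (contract G π) a = vol_G (π⁻¹ a)`). -/
noncomputable def contract {W : Type} [Fintype W] (G : WGraph V) (π : V → W) :
    WGraph W where
  w a b := ∑ u ∈ Finset.univ.filter (fun u => π u = a),
             ∑ v ∈ Finset.univ.filter (fun v => π v = b), G.w u v
  symm a b := by
    try dsimp only
    rw [Finset.sum_comm]
    exact Finset.sum_congr rfl fun x _ => Finset.sum_congr rfl fun y _ => G.symm y x
  nonneg a b :=
    Finset.sum_nonneg fun u _ => Finset.sum_nonneg fun v _ => G.nonneg u v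

/-- The simple graph underlying a weighted graph. -/
def toSimpleGraph (G : WGraph V) : SimpleGraph V :=
  SimpleGraph.fromRel fun u v => G.w u v ≠ 0

end WGraph

namespace WGraph

variable {V : Type} [Fintype V]

/-- The random subgraph in which each edge `{u,v}` of `G` is included (according to the
Boolean indicator family `X`, evaluated at the sample point `ω`) and, if included,
re-weighted to `w(u,v)/q(u,v)`. -/
noncomputable def sampleGraph (G : WGraph V) (q : V → V → ℝ)
    (hq0 : ∀ u v, 0 ≤ q u v) (hqsymm : ∀ u v, q u v = q v u)
    {Ω : Type} (X : Sym2 V → Ω → Bool) (ω : Ω) : WGraph V where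
  w u v := if X s(u, v) ω = true then G.w u v / q u v else 0
  symm u v := by
    try dsimp only
    have h1 : s(v, u) = s(u, v) := Sym2.eq_swap
    rw [h1, G.symm u v, hqsymm u v]
  nonneg u v := by
    by_cases h : X s(u, v) ω = true
    · simp only [if_pos h]; exact div_nonneg (G.nonneg u v) (hq0 u v)
    · simp only [if_neg h]; exact le_refl 0

/-- The dynamically maintained sparsifier `H'_{t'}`: the directly added edges
`E_added` (new edges, and old edges with a degree-doubled endpoint) are kept with
weight one, while all remaining old edges are the randomly sampled re-weighted edges
of the dynamic sparsifier of `G_t`. -/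
noncomputable def dynSample (Gt Gt' N : WGraph V) (degr : V → ℝ) (q : V → V → ℝ)
    (hq0 : ∀ u v, 0 ≤ q u v) (hqsymm : ∀ u v, q u v = q v u)
    {Ω : Type} (X : Sym2 V → Ω → Bool) (ω : Ω) : WGraph V where
  w u v :=
    if N.w u v = 1 ∨ (Gt.w u v = 1 ∧ (2 * degr u < Gt'.deg u ∨ 2 * degr v < Gt'.deg v))
    then Gt'.w u v
    else if X s(u, v) ω = true then Gt.w u v / q u v else 0
  symm u v := by
    try dsimp only
    have h1 : s(v, u) = s(u, v) := Sym2.eq_swap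
    rw [h1, Gt'.symm u v, Gt.symm u v, hqsymm u v, N.symm u v]
    exact if_congr (or_congr Iff.rfl (and_congr Iff.rfl or_comm)) rfl rfl
  nonneg u v := by
    by_cases h : N.w u v = 1 ∨ (Gt.w u v = 1 ∧ (2 * degr u < Gt'.deg u ∨ 2 * degr v < Gt'.deg v))
    · simp only [if_pos h]; exact Gt'.nonneg u v
    · simp only [if_neg h]
      by_cases h' : X s(u, v) ω = true
      · simp only [if_pos h']; exact div_nonneg (Gt.nonneg u v) (hq0 u v)
      · simp only [if_neg h']; exact le_refl 0

/-- The "mixed" graph whose contraction is the dynamically maintained contracted graph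
`G̃_{t'}`: on pairs touching a non-contracted vertex it carries the weights of `G_{t'}`,
and on pairs of still-contracted vertices it carries the weights of the sparsifier `H_t`
together with the newly inserted edges `N`. -/
noncomputable def mixed (Gt' Ht N : WGraph V) (Vnc : Finset V) : WGraph V where
  w u v := if u ∈ Vnc ∨ v ∈ Vnc then Gt'.w u v else Ht.w u v + N.w u v
  symm u v := by
    try dsimp only
    by_cases h : u ∈ Vnc ∨ v ∈ Vnc
    · rw [if_pos h, if_pos h.symm, Gt'.symm]
    · rw [if_neg h, if_neg fun h' => h h'.symm, Ht.symm u v, N.symm u v]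
  nonneg u v := by
    try dsimp only
    by_cases h : u ∈ Vnc ∨ v ∈ Vnc
    · rw [if_pos h]; exact Gt'.nonneg u v
    · rw [if_neg h]; exact add_nonneg (Ht.nonneg u v) (N.nonneg u v)

/-- The map sending every vertex of `V_{t'}` to its representative in the contracted
graph: non-contracted vertices are mapped to themselves, and every other vertex is
mapped to the super vertex of its cluster. -/
noncomputable def piMap [DecidableEq V] {k : ℕ} (Vnc : Finset V) (cl : V → Fin k) :
    V → Fin k ⊕ {v : V // v ∈ Vnc} := fun v =>
  if h : v ∈ Vnc then Sum.inr ⟨v, h⟩ else Sum.inl (cl v)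

/-- `Ã`: the representation of `A ⊆ V_{t'}` among the non-contracted vertices of the
contracted graph. -/
noncomputable def tildeSet [DecidableEq V] (k : ℕ) (Vnc : Finset V) (A : Finset V) :
    Finset (Fin k ⊕ {v : V // v ∈ Vnc}) :=
  Finset.univ.filter fun x => Sum.elim (fun _ => False) (fun v => (v : V) ∈ A) x

end WGraph


section AuxSpectral
set_option linter.unusedSectionVars false
set_option maxHeartbeats 1000000
open Matrix

variable {V : Type} [Fintype V] [DecidableEq V]

variable {V : Type} [Fintype V] [DecidableEq V]

noncomputable def dotR {V : Type} [Fintype V] (x y : V → ℝ) : ℝ := ∑ u, x u * y u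

lemma dotR_comm (x y : V → ℝ) : dotR x y = dotR y x := by
  simp [dotR, mul_comm]

lemma dotR_sum_right {ι : Type*} (x : V → ℝ) (s : Finset ι) (y : ι → V → ℝ) :
    dotR x (fun u => ∑ i ∈ s, y i u) = ∑ i ∈ s, dotR x (y i) := by
  simp only [dotR, Finset.mul_sum]
  exact Finset.sum_comm

lemma dotR_smul_right (c : ℝ) (x y : V → ℝ) : dotR x (fun u => c * y u) = c * dotR x y := by
  simp only [dotR, Finset.mul_sum]
  exact Finset.sum_congr rfl fun u _ => by ring

lemma dotR_add_right (x y z : V → ℝ) : dotR x (fun u => y u + z u) = dotR x y + dotR x z := by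
  simp [dotR, mul_add, Finset.sum_add_distrib]

lemma dotR_add_left (x y z : V → ℝ) : dotR (fun u => x u + y u) z = dotR x z + dotR y z := by
  simp [dotR, add_mul, Finset.sum_add_distrib]

lemma inner_eq_dotR (x y : EuclideanSpace ℝ V) : (inner ℝ x y : ℝ) = dotR x y := by
  simp [dotR, PiLp.inner_apply, RCLike.inner_apply, mul_comm]

lemma parseval (b : OrthonormalBasis V ℝ (EuclideanSpace ℝ V)) (x y : V → ℝ) :
    ∑ j, dotR (⇑(b j)) x * dotR (⇑(b j)) y = dotR x y := by
  have h := b.sum_inner_mul_inner (𝕜 := ℝ) (WithLp.toLp 2 x)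
    (WithLp.toLp 2 y)
  simp only [inner_eq_dotR, WithLp.ofLp_toLp] at h
  rw [← h]
  exact Finset.sum_congr rfl fun j _ => by rw [dotR_comm (⇑(b j)) x]

lemma dotR_mulVec_symm (L : Matrix V V ℝ) (hL : L.IsHermitian) (x y : V → ℝ) :
    dotR x (L.mulVec y) = dotR (L.mulVec x) y := by
  have ht : Lᵀ = L := by
    rw [← Matrix.conjTranspose_eq_transpose_of_trivial]; exact hL
  calc dotR x (L.mulVec y) = dotProduct x (L.mulVec y) := rfl
    _ = dotProduct (Matrix.vecMul x L) y := Matrix.dotProduct_mulVec x L y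
    _ = dotProduct (Matrix.mulVec Lᵀ x) y := by
        conv_lhs => rw [← ht, Matrix.vecMul_transpose, ← ht]
    _ = dotR (L.mulVec x) y := by rw [ht]; rfl

lemma sorted_get_lt_iff (b : ℝ) : ∀ (ℓ : List ℝ), ℓ.Pairwise (· ≤ ·) → ∀ (i : ℕ) (hi : i < ℓ.length),
    (ℓ.get ⟨i, hi⟩ < b ↔ i < ℓ.countP (fun x => decide (x < b))) := by
  intro ℓ
  induction ℓ with
  | nil => intro _ i hi; simp at hi
  | cons a t ih =>
    intro hs i hi
    have hst : t.Pairwise (· ≤ ·) := hs.of_cons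
    have ha : ∀ x ∈ t, a ≤ x := fun x hx => (List.rel_of_pairwise_cons hs) hx
    by_cases hab : a < b
    · have hc : (a :: t).countP (fun x => decide (x < b)) =
        t.countP (fun x => decide (x < b)) + 1 := by
        rw [List.countP_cons]; simp [hab]
      cases i with
      | zero => simpa [hc] using hab
      | succ j =>
        have hj : j < t.length := by simpa using hi
        have := ih hst j hj
        simpa [hc, Nat.succ_lt_succ_iff] using this
    · have hta : ∀ x ∈ t, ¬ (x < b) := fun x hx h =>
        hab (lt_of_le_of_lt (ha x hx) h)
      have hc : (a :: t).countP (fun x => decide (x < b)) = 0 := by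
        rw [List.countP_cons]
        have : t.countP (fun x => decide (x < b)) = 0 :=
          List.countP_eq_zero.2 (by intro x hx; simpa using hta x hx)
        simp [hab, this]
      cases i with
      | zero => simp [hc, hab]
      | succ j =>
        have hj : j < t.length := by simpa using hi
        simp only [hc, List.get]
        constructor
        · intro h; exact absurd h (hta _ (List.get_mem t _))
        · omega

lemma card_filter_fin_lt (k m : ℕ) (h : m ≤ k) :
    (Finset.univ.filter (fun i : Fin k => i.1 < m)).card = m := by
  have h2 : (Finset.univ.filter (fun i : Fin k => i.1 < m)).card
      = (Finset.univ : Finset (Fin m)).card := by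
    refine Finset.card_bij' (fun i hi => (⟨i.1, (Finset.mem_filter.1 hi).2⟩ : Fin m))
      (fun j _ => (⟨j.1, lt_of_lt_of_le j.2 h⟩ : Fin k)) ?_ ?_ ?_ ?_
    · intro a ha; exact Finset.mem_univ _
    · intro a ha; exact Finset.mem_filter.2 ⟨Finset.mem_univ _, a.2⟩
    · intro a ha; rfl
    · intro a ha; rfl
  simpa using h2

section CH

open Polynomial

variable {n : Type*} [Fintype n] [DecidableEq n]

lemma charpoly_conj_eq {R : Type*} [CommRing R] (P M Q : Matrix n n R) (h : P * Q = 1) :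
    (P * M * Q).charpoly = M.charpoly := by
  have h' : (C : R →+* R[X]).mapMatrix P * (C : R →+* R[X]).mapMatrix Q = 1 := by
    rw [← _root_.map_mul, h, _root_.map_one]
  have hdet : ((C : R →+* R[X]).mapMatrix P).det * ((C : R →+* R[X]).mapMatrix Q).det = 1 := by
    rw [← det_mul, h', det_one]
  have hc : charmatrix (P * M * Q) =
      (C : R →+* R[X]).mapMatrix P * charmatrix M * (C : R →+* R[X]).mapMatrix Q := by
    unfold charmatrix
    rw [mul_sub, sub_mul, _root_.map_mul, _root_.map_mul]
    congr 1
    have hcomm : ∀ A : Matrix n n R[X], A * scalar n X = scalar n X * A := fun A =>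
      ((scalar_commute X (fun r => (Commute.all X r)) A)).symm
    rw [hcomm, mul_assoc, h', mul_one]
  rw [Matrix.charpoly, hc, det_mul, det_mul]
  have : ((C : R →+* R[X]).mapMatrix P).det * (charmatrix M).det *
      ((C : R →+* R[X]).mapMatrix Q).det =
      (((C : R →+* R[X]).mapMatrix P).det * ((C : R →+* R[X]).mapMatrix Q).det) *
        (charmatrix M).det := by ring
  rw [this, hdet, one_mul]
  rfl

lemma charpoly_diagonal_roots (d : n → ℝ) :
    (Matrix.diagonal d).charpoly.roots = Finset.univ.val.map d := by
  have : charmatrix (Matrix.diagonal d) = Matrix.diagonal (fun i => (X : ℝ[X]) - C (d i)) := by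
    unfold charmatrix
    rw [RingHom.mapMatrix_apply, scalar_apply, Matrix.diagonal_map (map_zero _), ← diagonal_sub]
  rw [Matrix.charpoly, this, det_diagonal]
  have h2 : ∏ i, ((X : ℝ[X]) - C (d i)) = ((Finset.univ.val.map d).map fun a => (X : ℝ[X]) - C a).prod := by
    rw [Multiset.map_map]
    rfl
  rw [h2, roots_multiset_prod_X_sub_C]

lemma hermitian_charpoly_roots (M : Matrix n n ℝ) (hM : M.IsHermitian) :
    M.charpoly.roots = Finset.univ.val.map hM.eigenvalues := by
  have hs := hM.spectral_theorem
  have hd : (RCLike.ofReal ∘ hM.eigenvalues : n → ℝ) = hM.eigenvalues := by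
    ext i; simp
  have h1 : ((hM.eigenvectorUnitary : Matrix n n ℝ)) * (star (hM.eigenvectorUnitary : Matrix n n ℝ)) = 1 := by
    exact Unitary.mul_star_self_of_mem (hM.eigenvectorUnitary).2
  have h2 : M.charpoly = (Matrix.diagonal (RCLike.ofReal ∘ hM.eigenvalues : n → ℝ)).charpoly := by
    conv_lhs => rw [hs]
    exact charpoly_conj_eq _ _ _ h1
  rw [h2, hd, charpoly_diagonal_roots]

end CH

lemma spectral_approx (L : Matrix V V ℝ) (hL : L.IsHermitian) (k : ℕ) (f : Fin k → V → ℝ)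
    (hev : ∀ i : Fin k, L.mulVec (f i) =
      ((Multiset.sort L.charpoly.roots (· ≤ ·)).getD i.1 0) • f i)
    (hnorm : ∀ i, dotR (f i) (f i) = 1)
    (horth : ∀ i j, i ≠ j → dotR (f i) (f j) = 0)
    (hpsd : ∀ x : V → ℝ, 0 ≤ dotR x (L.mulVec x))
    (hpos : 0 < (Multiset.sort L.charpoly.roots (· ≤ ·)).getD k 0)
    (g : V → ℝ) :
    ((Multiset.sort L.charpoly.roots (· ≤ ·)).getD k 0) *
      dotR (fun u => g u - ∑ j, dotR (f j) g * f j u)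
        (fun u => g u - ∑ j, dotR (f j) g * f j u)
      ≤ dotR g (L.mulVec g) := by
  set ℓ : List ℝ := Multiset.sort L.charpoly.roots (· ≤ ·) with hℓdef
  set μ : V → ℝ := hL.eigenvalues with hμdef
  set v : V → V → ℝ := fun j => ⇑(hL.eigenvectorBasis j) with hvdef
  have heig : ∀ j, L.mulVec (v j) = μ j • v j := fun j => hL.mulVec_eigenvectorBasis j
  have hℓsorted : ℓ.Pairwise (· ≤ ·) := Multiset.pairwise_sort _ _
  have hℓms : (↑ℓ : Multiset ℝ) = L.charpoly.roots := Multiset.sort_eq _ _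
  have hroots : L.charpoly.roots = Finset.univ.val.map μ := hermitian_charpoly_roots L hL
  have hk : k < ℓ.length := by
    by_contra hcon
    push_neg at hcon
    rw [List.getD_eq_default ℓ 0 hcon] at hpos
    exact lt_irrefl 0 hpos
  set lamK : ℝ := ℓ.getD k 0 with hlamK
  have hlamKget : lamK = ℓ.get ⟨k, hk⟩ := List.getD_eq_get ℓ 0 ⟨k, hk⟩
  set m : ℕ := ℓ.countP (fun x => decide (x < lamK)) with hm
  have key : ∀ (i : ℕ) (hi : i < ℓ.length), (ℓ.get ⟨i, hi⟩ < lamK ↔ i < m) :=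
    sorted_get_lt_iff lamK ℓ hℓsorted
  have hmk : m ≤ k := by
    by_contra hcon
    push_neg at hcon
    have := (key k hk).2 hcon
    rw [← hlamKget] at this
    exact lt_irrefl _ this
  -- the finsets T and I'
  set T : Finset V := Finset.univ.filter (fun j => μ j < lamK) with hTdef
  set I' : Finset (Fin k) := Finset.univ.filter (fun i : Fin k => ℓ.getD i.1 0 < lamK) with hIdef
  have hgetD : ∀ i : Fin k, ℓ.getD i.1 0 = ℓ.get ⟨i.1, lt_trans i.2 hk⟩ :=
    fun i => List.getD_eq_get ℓ 0 ⟨i.1, lt_trans i.2 hk⟩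
  have hTcard : T.card = m := by
    have h1 : T.card = Multiset.countP (fun j => μ j < lamK) Finset.univ.val := by
      show Multiset.card _ = _
      rw [Finset.filter_val]
      exact (Multiset.countP_eq_card_filter _ _).symm
    have h2 : m = Multiset.countP (fun x => x < lamK) (↑ℓ) := by
      rw [hm]; simp [Multiset.coe_countP]
    rw [h1, h2, hℓms, hroots, Multiset.countP_map, Multiset.countP_eq_card_filter]
  have hIcard : I'.card = m := by
    have h1 : I' = Finset.univ.filter (fun i : Fin k => i.1 < m) := by
      ext i
      simp only [hIdef, Finset.mem_filter, Finset.mem_univ, true_and]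
      rw [hgetD i, key i.1 (lt_trans i.2 hk)]
    rw [h1, card_filter_fin_lt k m hmk]
  have hcards : Fintype.card ↥I' = Fintype.card ↥T := by
    rw [Fintype.card_coe, Fintype.card_coe, hIcard, hTcard]
  set e : ↥I' ≃ ↥T := Fintype.equivOfCardEq hcards with hedef
  -- vanishing of cross inner products
  have hvan : ∀ i : Fin k, i ∈ I' → ∀ j : V, j ∉ T → dotR (v j) (f i) = 0 := by
    intro i hi j hj
    have hi' : ℓ.getD i.1 0 < lamK := (Finset.mem_filter.1 hi).2
    have hj' : ¬ (μ j < lamK) := fun hc => hj (Finset.mem_filter.2 ⟨Finset.mem_univ _, hc⟩)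
    have h1 : dotR (v j) (L.mulVec (f i)) = (ℓ.getD i.1 0) * dotR (v j) (f i) := by
      rw [hev i]
      rw [show ((ℓ.getD i.1 0) • f i) = fun u => (ℓ.getD i.1 0) * f i u from rfl]
      exact dotR_smul_right _ _ _
    have h2 : dotR (v j) (L.mulVec (f i)) = μ j * dotR (v j) (f i) := by
      rw [dotR_mulVec_symm L hL, heig j]
      rw [show (μ j • v j) = fun u => μ j * v j u from rfl]
      rw [dotR_comm (fun u => μ j * v j u) (f i), dotR_smul_right, dotR_comm]
    have h3 : (μ j - ℓ.getD i.1 0) * dotR (v j) (f i) = 0 := by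
      rw [sub_mul, ← h1, ← h2]; ring
    rcases mul_eq_zero.1 h3 with h4 | h4
    · exfalso
      have : lamK ≤ μ j := not_lt.1 hj'
      have : ℓ.getD i.1 0 < μ j := lt_of_lt_of_le hi' this
      linarith [sub_eq_zero.1 h4]
    · exact h4
  -- the vector h
  set a : Fin k → ℝ := fun i => dotR (f i) g with hadef
  set h : V → ℝ := fun u => g u - ∑ j, a j * f j u with hhdef
  have hfh : ∀ i : Fin k, dotR (f i) h = 0 := by
    intro i
    have h1 : dotR (f i) h = dotR (f i) g - ∑ j, a j * dotR (f i) (f j) := by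
      rw [hhdef]
      rw [show (fun u => g u - ∑ j, a j * f j u) =
        (fun u => g u + (-1 : ℝ) * (∑ j, a j * f j u)) from by funext u; ring]
      rw [dotR_add_right, dotR_smul_right]
      rw [show (fun u => ∑ j, a j * f j u) = (fun u => ∑ j, (fun jj => fun uu => a jj * f jj uu) j u) from rfl]
      rw [dotR_sum_right]
      have : ∀ j, dotR (f i) (fun u => a j * f j u) = a j * dotR (f i) (f j) := by
        intro j
        exact dotR_smul_right _ _ _
      simp only [this]
      ring
    rw [h1, Finset.sum_eq_single i]
    · rw [hnorm i]; simp [hadef]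
    · intro j _ hji; rw [horth i j (Ne.symm hji)]; ring
    · intro hcon; exact absurd (Finset.mem_univ i) hcon
  -- full-sum Parseval restricted to T
  have hfull : ∀ (s : Fin k), s ∈ I' → ∀ (x : V → ℝ),
      ∑ j ∈ T, dotR (v j) (f s) * dotR (v j) x = dotR (f s) x := by
    intro s hs x
    rw [← parseval hL.eigenvectorBasis (f s) x]
    apply Finset.sum_subset (Finset.subset_univ T)
    intro j _ hj
    rw [hvan s hs j hj]
    ring
  -- the matrix B
  set B : Matrix ↥I' ↥I' ℝ := Matrix.of (fun r s => dotR (v ↑(e r)) (f ↑s)) with hBdef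
  have hBtB : Bᵀ * B = 1 := by
    ext s s'
    rw [Matrix.mul_apply]
    have h1 : ∀ r : ↥I', Bᵀ s r * B r s' = dotR (v ↑(e r)) (f ↑s) * dotR (v ↑(e r)) (f ↑s') := by
      intro r; rfl
    simp only [h1]
    have h2 : ∑ r : ↥I', dotR (v ↑(e r)) (f ↑s) * dotR (v ↑(e r)) (f ↑s')
        = ∑ t : ↥T, dotR (v ↑t) (f ↑s) * dotR (v ↑t) (f ↑s') :=
      e.sum_comp (fun t => dotR (v ↑t) (f ↑s) * dotR (v ↑t) (f ↑s'))
    rw [h2, Finset.sum_coe_sort T (fun j => dotR (v j) (f ↑s) * dotR (v j) (f ↑s')),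
      hfull ↑s s.2 (f ↑s')]
    by_cases hss : s = s'
    · subst hss; rw [hnorm, Matrix.one_apply_eq]
    · rw [horth _ _ (fun hc => hss (Subtype.ext hc)), Matrix.one_apply_ne hss]
  have hBBt : B * Bᵀ = 1 := mul_eq_one_comm.1 hBtB
  set cvec : ↥I' → ℝ := fun r => dotR (v ↑(e r)) h with hcvecdef
  have hBtc : Bᵀ.mulVec cvec = 0 := by
    funext s
    show ∑ r : ↥I', Bᵀ s r * cvec r = 0
    have h1 : ∀ r : ↥I', Bᵀ s r * cvec r = dotR (v ↑(e r)) (f ↑s) * dotR (v ↑(e r)) h := by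
      intro r; rfl
    simp only [h1]
    rw [e.sum_comp (fun t => dotR (v ↑t) (f ↑s) * dotR (v ↑t) h),
      Finset.sum_coe_sort T (fun j => dotR (v j) (f ↑s) * dotR (v j) h),
      hfull ↑s s.2 h, hfh ↑s]
  have hcvec0 : cvec = 0 := by
    calc cvec = (1 : Matrix ↥I' ↥I' ℝ).mulVec cvec := (Matrix.one_mulVec cvec).symm
      _ = (B * Bᵀ).mulVec cvec := by rw [hBBt]
      _ = B.mulVec (Bᵀ.mulVec cvec) := (Matrix.mulVec_mulVec _ _ _).symm
      _ = 0 := by rw [hBtc, Matrix.mulVec_zero]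
  have hTzero : ∀ j : V, μ j < lamK → dotR (v j) h = 0 := by
    intro j hj
    have hjT : j ∈ T := Finset.mem_filter.2 ⟨Finset.mem_univ _, hj⟩
    have := congrFun hcvec0 (e.symm ⟨j, hjT⟩)
    rw [hcvecdef] at this
    simpa [e.apply_symm_apply] using this
  -- quadratic form bounds
  have hhh : dotR h h = ∑ j, (dotR (v j) h)^2 := by
    rw [← parseval hL.eigenvectorBasis h h]
    exact Finset.sum_congr rfl fun j _ => (sq _).symm
  have hvLh : ∀ j, dotR (v j) (L.mulVec h) = μ j * dotR (v j) h := by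
    intro j
    rw [dotR_mulVec_symm L hL, heig j]
    rw [show (μ j • v j) = fun u => μ j * v j u from rfl]
    rw [dotR_comm (fun u => μ j * v j u) h, dotR_smul_right, dotR_comm]
  have hhLh : dotR h (L.mulVec h) = ∑ j, μ j * (dotR (v j) h)^2 := by
    rw [← parseval hL.eigenvectorBasis h (L.mulVec h)]
    exact Finset.sum_congr rfl fun j _ => by rw [hvLh j]; ring
  have hlow : lamK * dotR h h ≤ dotR h (L.mulVec h) := by
    rw [hhh, hhLh, Finset.mul_sum]
    apply Finset.sum_le_sum
    intro j _
    by_cases hj : μ j < lamK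
    · rw [hTzero j hj]; simp
    · have : lamK ≤ μ j := not_lt.1 hj
      exact mul_le_mul_of_nonneg_right this (sq_nonneg _)
  -- comparison with g
  have hp : ∀ x : V → ℝ, dotR x (L.mulVec (fun u => ∑ j, a j * f j u))
      = ∑ j, a j * (ℓ.getD j.1 0) * dotR x (f j) := by
    intro x
    have h1 : (fun u => ∑ j, a j * f j u) = ∑ j, a j • f j := by
      funext u; simp [Finset.sum_apply]
    rw [h1]
    have h2 : L.mulVec (∑ j, a j • f j) = ∑ j, a j • ((ℓ.getD j.1 0) • f j) := by
      have := map_sum (Matrix.mulVecLin L) (fun j => a j • f j) Finset.univ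
      rw [show L.mulVec (∑ j, a j • f j) = (Matrix.mulVecLin L) (∑ j, a j • f j) from rfl, this]
      exact Finset.sum_congr rfl fun j _ => by
        rw [_root_.map_smul, show (Matrix.mulVecLin L) (f j) = L.mulVec (f j) from rfl, hev j]
    rw [h2]
    rw [show (∑ j, a j • ((ℓ.getD j.1 0) • f j)) =
      fun u => ∑ j, (fun jj uu => (a jj * (ℓ.getD jj.1 0)) * f jj uu) j u from by
        funext u; simp [Finset.sum_apply, mul_assoc]]
    rw [dotR_sum_right]
    exact Finset.sum_congr rfl fun j _ => by rw [dotR_smul_right]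
  have hgdecomp : dotR g (L.mulVec g) = dotR h (L.mulVec h) + ∑ j, (a j)^2 * (ℓ.getD j.1 0) := by
    have hg : g = fun u => h u + (∑ j, a j * f j u) := by
      funext u; rw [hhdef]; ring
    rw [hg]
    rw [show L.mulVec (fun u => h u + (∑ j, a j * f j u))
        = fun u => (L.mulVec h) u + (L.mulVec (fun uu => ∑ j, a j * f j uu)) u from by
      rw [show (fun u => h u + (∑ j, a j * f j u)) = h + (fun u => ∑ j, a j * f j u) from rfl,
        Matrix.mulVec_add]; rfl]
    rw [dotR_add_left, dotR_add_right, dotR_add_right]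
    have hc1 : dotR h (L.mulVec (fun uu => ∑ j, a j * f j uu)) = 0 := by
      rw [hp h]
      apply Finset.sum_eq_zero
      intro j _
      rw [dotR_comm, hfh j]; ring
    have hc2 : dotR (fun u => ∑ j, a j * f j u) (L.mulVec h) = 0 := by
      rw [dotR_mulVec_symm L hL, dotR_comm, hp h]
      apply Finset.sum_eq_zero
      intro j _
      rw [dotR_comm, hfh j]; ring
    have hc3 : dotR (fun u => ∑ j, a j * f j u) (L.mulVec (fun uu => ∑ j, a j * f j uu))
        = ∑ j, (a j)^2 * (ℓ.getD j.1 0) := by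
      rw [hp]
      apply Finset.sum_congr rfl
      intro j _
      have : dotR (fun u => ∑ j', a j' * f j' u) (f j) = a j := by
        rw [dotR_comm]
        rw [show (fun u => ∑ j', a j' * f j' u)
          = (fun u => ∑ j', (fun jj uu => a jj * f jj uu) j' u) from rfl, dotR_sum_right]
        rw [Finset.sum_eq_single j]
        · rw [dotR_smul_right, hnorm j, mul_one]
        · intro b _ hbj
          rw [dotR_smul_right, horth j b (Ne.symm hbj), mul_zero]
        · intro hcon; exact absurd (Finset.mem_univ j) hcon
      rw [this]; ring
    rw [hc1, hc2, hc3]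
    ring
  have hlamnonneg : ∀ j : Fin k, 0 ≤ ℓ.getD j.1 0 := by
    intro j
    have h1 : dotR (f j) (L.mulVec (f j)) = ℓ.getD j.1 0 := by
      rw [hev j, show ((ℓ.getD j.1 0) • f j) = fun u => (ℓ.getD j.1 0) * f j u from rfl,
        dotR_smul_right, hnorm j, mul_one]
    rw [← h1]
    exact hpsd (f j)
  have hsum_nonneg : 0 ≤ ∑ j, (a j)^2 * (ℓ.getD j.1 0) :=
    Finset.sum_nonneg fun j _ => mul_nonneg (sq_nonneg _) (hlamnonneg j)
  calc lamK * dotR h h ≤ dotR h (L.mulVec h) := hlow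
    _ ≤ dotR g (L.mulVec g) := by rw [hgdecomp]; linarith

section App
open WGraph Matrix

variable {V : Type} [Fintype V] [DecidableEq V]

lemma WGraph.deg_nonneg (H : WGraph V) (u : V) : 0 ≤ H.deg u :=
  Finset.sum_nonneg fun v _ => H.nonneg u v

lemma WGraph.vol_nonneg (H : WGraph V) (s : Finset V) : 0 ≤ H.vol s :=
  Finset.sum_nonneg fun v _ => H.deg_nonneg v

lemma WGraph.cut_nonneg (H : WGraph V) (s t : Finset V) : 0 ≤ H.cut s t :=
  Finset.sum_nonneg fun u _ => Finset.sum_nonneg fun v _ => H.nonneg u v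

lemma WGraph.conductance_nonneg (H : WGraph V) (s : Finset V) : 0 ≤ H.conductance s := by
  unfold WGraph.conductance
  split
  · norm_num
  · exact div_nonneg (H.cut_nonneg _ _) (le_min (H.vol_nonneg _) (H.vol_nonneg _))

lemma normLap_isHermitian (H : WGraph V) : H.normLap.IsHermitian := by
  unfold WGraph.normLap
  rw [Matrix.IsHermitian, Matrix.conjTranspose_eq_transpose_of_trivial]
  have : (Matrix.of H.w)ᵀ = Matrix.of H.w := by
    ext u v; exact H.symm v u
  rw [Matrix.transpose_sub, Matrix.transpose_one, Matrix.transpose_mul, Matrix.transpose_mul,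
    Matrix.diagonal_transpose, this]
  rw [Matrix.mul_assoc]

lemma dotR_normLap (H : WGraph V) (x : V → ℝ) :
    dotR x (H.normLap.mulVec x) = (∑ u, x u ^ 2) -
      ∑ u, ∑ v, (x u * (Real.sqrt (H.deg u))⁻¹) * H.w u v * (x v * (Real.sqrt (H.deg v))⁻¹) := by
  unfold WGraph.normLap
  rw [Matrix.sub_mulVec, Matrix.one_mulVec]
  have h1 : dotR x (fun u => x u - ((Matrix.diagonal fun u => (Real.sqrt (H.deg u))⁻¹) *
      (Matrix.of H.w) * (Matrix.diagonal fun u => (Real.sqrt (H.deg u))⁻¹)).mulVec x u)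
      = dotR x x - dotR x (((Matrix.diagonal fun u => (Real.sqrt (H.deg u))⁻¹) *
      (Matrix.of H.w) * (Matrix.diagonal fun u => (Real.sqrt (H.deg u))⁻¹)).mulVec x) := by
    simp [dotR, mul_sub, Finset.sum_sub_distrib]
  rw [show (x - ((Matrix.diagonal fun u => (Real.sqrt (H.deg u))⁻¹) * (Matrix.of H.w) *
      (Matrix.diagonal fun u => (Real.sqrt (H.deg u))⁻¹)).mulVec x) = fun u => x u -
      ((Matrix.diagonal fun u => (Real.sqrt (H.deg u))⁻¹) * (Matrix.of H.w) *
      (Matrix.diagonal fun u => (Real.sqrt (H.deg u))⁻¹)).mulVec x u from rfl, h1]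
  congr 1
  · simp [dotR, pow_two]
  · rw [dotR]
    have hM : ∀ u v, ((Matrix.diagonal fun u => (Real.sqrt (H.deg u))⁻¹) * (Matrix.of H.w) *
        (Matrix.diagonal fun u => (Real.sqrt (H.deg u))⁻¹)) u v
        = (Real.sqrt (H.deg u))⁻¹ * H.w u v * (Real.sqrt (H.deg v))⁻¹ := by
      intro u v
      rw [Matrix.mul_diagonal, Matrix.diagonal_mul]
      rfl
    have : ∀ u, (((Matrix.diagonal fun u => (Real.sqrt (H.deg u))⁻¹) * (Matrix.of H.w) *
        (Matrix.diagonal fun u => (Real.sqrt (H.deg u))⁻¹)).mulVec x) u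
        = ∑ v, (Real.sqrt (H.deg u))⁻¹ * H.w u v * (Real.sqrt (H.deg v))⁻¹ * x v := by
      intro u
      rw [Matrix.mulVec, dotProduct]
      exact Finset.sum_congr rfl fun v _ => by rw [hM u v]
    simp only [this, Finset.mul_sum]
    exact Finset.sum_congr rfl fun u _ => Finset.sum_congr rfl fun v _ => by ring

lemma normLap_psd (H : WGraph V) (x : V → ℝ) : 0 ≤ dotR x (H.normLap.mulVec x) := by
  rw [dotR_normLap]
  set y : V → ℝ := fun u => x u * (Real.sqrt (H.deg u))⁻¹ with hy
  have hdy : ∀ u, H.deg u * y u ^ 2 ≤ x u ^ 2 := by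
    intro u
    by_cases hd : H.deg u = 0
    · rw [hd]; simpa using sq_nonneg (x u)
    · have hd0 : 0 < H.deg u := lt_of_le_of_ne (H.deg_nonneg u) (Ne.symm hd)
      have hs : Real.sqrt (H.deg u) ^ 2 = H.deg u := Real.sq_sqrt (le_of_lt hd0)
      have hs0 : Real.sqrt (H.deg u) ≠ 0 := by
        intro hc; rw [hc] at hs; simpa [← hs] using hd
      rw [hy]
      have : x u * (Real.sqrt (H.deg u))⁻¹ * (x u * (Real.sqrt (H.deg u))⁻¹)
          = x u ^ 2 * ((Real.sqrt (H.deg u))^2)⁻¹ := by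
        rw [pow_two]; ring
      rw [pow_two, this, hs]
      rw [mul_comm (H.deg u) _, mul_assoc, inv_mul_cancel₀ hd, mul_one]
  have hdeg : ∀ u, H.deg u * y u ^ 2 = ∑ v, H.w u v * y u ^ 2 := by
    intro u; rw [WGraph.deg, Finset.sum_mul]
  have hsym : ∑ u, ∑ v, H.w u v * (y u ^ 2 - y u * y v)
      = ∑ u, ∑ v, H.w u v * (y v ^ 2 - y v * y u) := by
    rw [Finset.sum_comm]
    exact Finset.sum_congr rfl fun u _ => Finset.sum_congr rfl fun v _ => by
      rw [H.symm u v]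
  have hquad : 0 ≤ ∑ u, ∑ v, H.w u v * (y u - y v)^2 :=
    Finset.sum_nonneg fun u _ => Finset.sum_nonneg fun v _ =>
      mul_nonneg (H.nonneg u v) (sq_nonneg _)
  have hsplit : ∑ u, ∑ v, H.w u v * (y u - y v)^2
      = (∑ u, ∑ v, H.w u v * (y u ^ 2 - y u * y v))
        + ∑ u, ∑ v, H.w u v * (y v ^ 2 - y v * y u) := by
    rw [← Finset.sum_add_distrib]
    exact Finset.sum_congr rfl fun u _ => by
      rw [← Finset.sum_add_distrib]
      exact Finset.sum_congr rfl fun v _ => by ring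
  have hmain : 0 ≤ ∑ u, ∑ v, H.w u v * (y u ^ 2 - y u * y v) := by
    nlinarith [hquad, hsplit, hsym]
  have hexp : ∑ u, ∑ v, H.w u v * (y u ^ 2 - y u * y v)
      = (∑ u, H.deg u * y u ^ 2) - ∑ u, ∑ v, (x u * (Real.sqrt (H.deg u))⁻¹) * H.w u v *
        (x v * (Real.sqrt (H.deg v))⁻¹) := by
    rw [← Finset.sum_sub_distrib]
    apply Finset.sum_congr rfl
    intro u _
    rw [hdeg u, ← Finset.sum_sub_distrib]
    exact Finset.sum_congr rfl fun v _ => by rw [hy]; ring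
  have hx : ∑ u, H.deg u * y u ^ 2 ≤ ∑ u, x u ^ 2 := Finset.sum_le_sum fun u _ => hdy u
  linarith


lemma indVec_eq (H : WGraph V) (s : Finset V) :
    indVec H s = fun u => (if u ∈ s then Real.sqrt (H.deg u) else 0) /
      Real.sqrt (sqNorm fun v => if v ∈ s then Real.sqrt (H.deg v) else 0) := by
  have hite : ∀ (p : Prop) (h1 h2 : Decidable p) (a b : ℝ),
      (@ite _ p h1 a b) = (@ite _ p h2 a b) := fun p h1 h2 a b => by
    rw [Subsingleton.elim h1 h2]
  funext u
  unfold WGraph.indVec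
  congr 1
  · exact hite _ _ _ _ _
  · congr 1
    congr 1
    funext v
    exact hite _ _ _ _ _

lemma cut_le_vol_compl (H : WGraph V) (s : Finset V) : H.cut s sᶜ ≤ H.vol sᶜ := by
  rw [WGraph.cut, Finset.sum_comm, WGraph.vol]
  apply Finset.sum_le_sum
  intro v _
  rw [WGraph.deg]
  have : ∀ u, H.w u v = H.w v u := fun u => H.symm u v
  simp only [this]
  exact Finset.sum_le_sum_of_subset_of_nonneg (Finset.subset_univ s)
    (fun u _ _ => H.nonneg v u)

lemma sqNorm_ind_eq_vol (H : WGraph V) (s : Finset V) :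
    sqNorm (fun v => if v ∈ s then Real.sqrt (H.deg v) else 0) = H.vol s := by
  rw [sqNorm]
  have : ∀ u, (if u ∈ s then Real.sqrt (H.deg u) else 0)^2
      = if u ∈ s then H.deg u else 0 := by
    intro u
    by_cases hu : u ∈ s
    · simp [hu, Real.sq_sqrt (H.deg_nonneg u)]
    · simp [hu]
  simp only [this]
  rw [Finset.sum_ite_mem, Finset.univ_inter, WGraph.vol]

lemma rayleigh_indVec (H : WGraph V) (s : Finset V) (hs : s ≠ ∅) :
    dotR (indVec H s) (H.normLap.mulVec (indVec H s)) ≤ H.conductance s := by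
  rw [indVec_eq]
  set ind : V → ℝ := fun u => if u ∈ s then Real.sqrt (H.deg u) else 0 with hind
  have hDvol : sqNorm ind = H.vol s := sqNorm_ind_eq_vol H s
  by_cases hD0 : H.vol s = 0
  · have hg : (fun u => ind u / Real.sqrt (sqNorm ind)) = fun _ => (0:ℝ) := by
      funext u
      rw [hDvol.trans hD0]
      simp
    rw [show (fun u => ind u / Real.sqrt (sqNorm fun v => if v ∈ s then Real.sqrt (H.deg v) else 0)) = (fun u => ind u / Real.sqrt (sqNorm ind)) from rfl]
    rw [hg]
    have : dotR (fun _ => (0:ℝ)) ((H.normLap).mulVec fun _ => (0:ℝ)) = 0 := by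
      simp [dotR]
    rw [this]
    exact H.conductance_nonneg s
  · have hDpos : 0 < H.vol s := lt_of_le_of_ne (H.vol_nonneg s) (Ne.symm hD0)
    have hsqD : Real.sqrt (H.vol s) ^ 2 = H.vol s := Real.sq_sqrt (le_of_lt hDpos)
    have hsqD0 : Real.sqrt (H.vol s) ≠ 0 := by
      intro hc; rw [hc] at hsqD; simp at hsqD; exact hD0 hsqD.symm
    have hgdef : (fun u => ind u / Real.sqrt (sqNorm ind)) = fun u => ind u / Real.sqrt (H.vol s) := by
      funext u
      rw [hDvol]
    rw [show (fun u => ind u / Real.sqrt (sqNorm fun v => if v ∈ s then Real.sqrt (H.deg v) else 0)) = (fun u => ind u / Real.sqrt (sqNorm ind)) from rfl, hgdef, dotR_normLap]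
    -- first term is 1
    have hA : ∑ u, (ind u / Real.sqrt (H.vol s)) ^ 2 = 1 := by
      have : ∀ u, (ind u / Real.sqrt (H.vol s)) ^ 2 = ind u ^ 2 / H.vol s := by
        intro u; rw [div_pow, hsqD]
      simp only [this]
      rw [← Finset.sum_div]
      rw [show (∑ u, ind u ^ 2) = H.vol s from hDvol]
      exact div_self hD0
    -- second term is cut(s,s)/vol(s)
    have hz : ∀ u v, (ind u / Real.sqrt (H.vol s) * (Real.sqrt (H.deg u))⁻¹) * H.w u v *
        (ind v / Real.sqrt (H.vol s) * (Real.sqrt (H.deg v))⁻¹)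
        = (if u ∈ s then (if v ∈ s then H.w u v else 0) else 0) / H.vol s := by
      intro u v
      by_cases hw : H.w u v = 0
      · rw [hw]
        by_cases hu : u ∈ s <;> by_cases hv : v ∈ s <;> simp [hu, hv, hw]
      · have hwu : 0 < H.w u v := lt_of_le_of_ne (H.nonneg u v) (Ne.symm hw)
        have hdu : 0 < H.deg u := by
          rw [WGraph.deg]
          calc (0:ℝ) < H.w u v := hwu
            _ ≤ ∑ x, H.w u x := Finset.single_le_sum (fun x _ => H.nonneg u x)
              (Finset.mem_univ v)
        have hdv : 0 < H.deg v := by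
          rw [WGraph.deg]
          have h2 : 0 < H.w v u := by rw [H.symm v u]; exact hwu
          calc (0:ℝ) < H.w v u := h2
            _ ≤ ∑ x, H.w v x := Finset.single_le_sum (fun x _ => H.nonneg v x)
              (Finset.mem_univ u)
        have hsu : Real.sqrt (H.deg u) ≠ 0 := ne_of_gt (Real.sqrt_pos.2 hdu)
        have hsv : Real.sqrt (H.deg v) ≠ 0 := ne_of_gt (Real.sqrt_pos.2 hdv)
        by_cases hu : u ∈ s <;> by_cases hv : v ∈ s <;>
          simp only [hind, hu, hv, if_true, if_false] <;> field_simp <;>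
          rw [hsqD] <;> ring
    have hB : ∑ u, ∑ v, (ind u / Real.sqrt (H.vol s) * (Real.sqrt (H.deg u))⁻¹) * H.w u v *
        (ind v / Real.sqrt (H.vol s) * (Real.sqrt (H.deg v))⁻¹) = H.cut s s / H.vol s := by
      simp only [hz]
      have h1 : ∀ u:V, ∑ v, (if u ∈ s then (if v ∈ s then H.w u v else 0) else 0) / H.vol s
          = (∑ v, if u ∈ s then (if v ∈ s then H.w u v else 0) else 0) / H.vol s :=
        fun u => (Finset.sum_div _ _ _).symm
      simp only [h1]
      rw [← Finset.sum_div]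
      congr 1
      have h2 : ∀ u:V, (∑ v, if u ∈ s then (if v ∈ s then H.w u v else 0) else 0)
          = if u ∈ s then (∑ v ∈ s, H.w u v) else 0 := by
        intro u
        by_cases hu : u ∈ s
        · simp only [hu, if_true]
          rw [Finset.sum_ite_mem, Finset.univ_inter]
        · simp [hu]
      simp only [h2]
      rw [Finset.sum_ite_mem, Finset.univ_inter, WGraph.cut]
    have hsplit : H.cut s s + H.cut s sᶜ = H.vol s := by
      rw [WGraph.cut, WGraph.cut, WGraph.vol, ← Finset.sum_add_distrib]
      apply Finset.sum_congr rfl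
      intro u _
      rw [WGraph.deg, ← Finset.sum_union disjoint_compl_right, Finset.union_compl]
    rw [hA, hB]
    have hgoal : 1 - H.cut s s / H.vol s = H.cut s sᶜ / H.vol s := by
      field_simp
      linarith
    rw [hgoal, WGraph.conductance, if_neg hs]
    by_cases hvc : H.vol sᶜ = 0
    · have hcz : H.cut s sᶜ = 0 := le_antisymm
        (le_trans (cut_le_vol_compl H s) (le_of_eq hvc)) (H.cut_nonneg _ _)
      rw [hcz]
      simp
    · have hvcpos : 0 < H.vol sᶜ := lt_of_le_of_ne (H.vol_nonneg _) (Ne.symm hvc)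
      have hminpos : 0 < min (H.vol s) (H.vol sᶜ) := lt_min hDpos hvcpos
      have hminle : min (H.vol s) (H.vol sᶜ) ≤ H.vol s := min_le_left _ _
      gcongr
      exact H.cut_nonneg _ _
end App


open WGraph in
/-- Part 1 of the structure theorem (Theorem `thm:struc`): each normalised cluster
indicator `ḡ_i` is well approximated by a linear combination of the bottom-`k`
eigenvectors of `𝓛_H`, with error `O(k / Υ_G(k))`. -/
theorem stmt_0 (c₁ c₂ cu : ℝ) (hc₁ : 0 < c₁) (hc₂ : 0 < c₂) (hcu : 0 < cu) :
    ∃ C : ℝ, 0 < C ∧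
      ∀ (V : Type) [Fintype V] [DecidableEq V] (G H : WGraph V) (k : ℕ)
        (S : Fin k → Finset V) (f : Fin k → V → ℝ),
        G.AchievesRho k S →
        cu * k ≤ G.upsilon k →
        G.IsCPS H k S c₁ c₂ →
        H.IsBottomEigenvectors k f →
        ∀ i : Fin k, ∃ a : Fin k → ℝ,
          sqNorm (fun u => indVec H (S i) u - ∑ j, a j * f j u) ≤ C * k / G.upsilon k := by
  refine ⟨c₁ / c₂, div_pos hc₁ hc₂, ?_⟩
  intro V _ _ G H k S f hAch hUps hCPS hBot i
  classical
  have hk1 : 1 ≤ (k:ℝ) := by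
    have : 0 < k := i.pos
    exact_mod_cast this
  have hbdd : BddAbove (Set.range fun j => G.conductance (S j)) :=
    Set.Finite.bddAbove (Set.finite_range _)
  have hrho0 : 0 ≤ G.rho k := by
    rw [← hAch.2]
    exact le_trans (G.conductance_nonneg (S i)) (le_ciSup hbdd i)
  have hPhi_le_rho : G.conductance (S i) ≤ G.rho k := by
    rw [← hAch.2]
    exact le_ciSup hbdd i
  have hUpos : 0 < G.upsilon k := lt_of_lt_of_le (by positivity) hUps
  have hrhopos : 0 < G.rho k := by
    rcases lt_or_eq_of_le hrho0 with h | h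
    · exact h
    · exfalso
      have : G.upsilon k = 0 := by
        rw [WGraph.upsilon, ← h, div_zero]
      rw [this] at hUpos
      exact lt_irrefl 0 hUpos
  have hlamG : G.lam (k+1) = G.upsilon k * G.rho k := by
    rw [WGraph.upsilon, div_mul_cancel₀ _ (ne_of_gt hrhopos)]
  have hlamGpos : 0 < G.lam (k+1) := by
    rw [hlamG]; exact mul_pos hUpos hrhopos
  have hlamH : c₂ * G.lam (k+1) ≤ H.lam (k+1) := hCPS.2
  have hlamHpos : 0 < H.lam (k+1) := lt_of_lt_of_le (mul_pos hc₂ hlamGpos) hlamH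
  -- set up the spectral lemma
  have hL : (H.normLap).IsHermitian := normLap_isHermitian H
  have hgetD : ∀ j : ℕ, H.lam (j+1)
      = (Multiset.sort (H.normLap).charpoly.roots (· ≤ ·)).getD j 0 := by
    intro j
    rw [WGraph.lam, Nat.add_sub_cancel]
  have hev : ∀ j : Fin k, (H.normLap).mulVec (f j) =
      ((Multiset.sort (H.normLap).charpoly.roots (· ≤ ·)).getD j.1 0) • f j := by
    intro j
    rw [← hgetD j.1]
    exact hBot.1 j
  have hnorm : ∀ j : Fin k, dotR (f j) (f j) = 1 := by
    intro j
    rw [show dotR (f j) (f j) = ∑ u, f j u ^ 2 from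
      Finset.sum_congr rfl fun u _ => (pow_two _).symm]
    exact hBot.2.1 j
  have horth : ∀ j j' : Fin k, j ≠ j' → dotR (f j) (f j') = 0 := fun j j' hjj =>
    hBot.2.2 j j' hjj
  have hpos : 0 < (Multiset.sort (H.normLap).charpoly.roots (· ≤ ·)).getD k 0 := by
    rw [← hgetD k]
    exact hlamHpos
  set g : V → ℝ := indVec H (S i) with hg
  have hspec := spectral_approx (H.normLap) hL k f hev hnorm horth
    (fun x => normLap_psd H x) hpos g
  refine ⟨fun j => dotR (f j) g, ?_⟩
  set Q : ℝ := sqNorm (fun u => g u - ∑ j, dotR (f j) g * f j u) with hQ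
  have hQdot : Q = dotR (fun u => g u - ∑ j, dotR (f j) g * f j u)
      (fun u => g u - ∑ j, dotR (f j) g * f j u) := by
    rw [hQ, WGraph.sqNorm]
    exact Finset.sum_congr rfl fun u _ => pow_two _
  have hQ0 : 0 ≤ Q := by
    rw [hQdot, dotR]
    exact Finset.sum_nonneg fun u _ => mul_self_nonneg _
  have hray : dotR g ((H.normLap).mulVec g) ≤ H.conductance (S i) := by
    rw [hg]
    exact rayleigh_indVec H (S i) (Finset.nonempty_iff_ne_empty.1 (hAch.1.1 i))
  have hchain : H.lam (k+1) * Q ≤ c₁ * k * G.rho k := by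
    have h1 : H.lam (k+1) * Q ≤ dotR g ((H.normLap).mulVec g) := by
      rw [hQdot, hgetD k]
      exact hspec
    have h2 : H.conductance (S i) ≤ c₁ * k * G.conductance (S i) := hCPS.1 i
    have h3 : c₁ * k * G.conductance (S i) ≤ c₁ * k * G.rho k := by
      apply mul_le_mul_of_nonneg_left hPhi_le_rho
      positivity
    linarith
  have h1 : c₂ * (G.upsilon k * G.rho k) * Q ≤ H.lam (k+1) * Q := by
    apply mul_le_mul_of_nonneg_right _ hQ0
    rw [← hlamG]
    exact hlamH
  have h3 : c₂ * G.upsilon k * Q ≤ c₁ * k := by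
    have := (mul_le_mul_iff_left₀ hrhopos).1
      (show (c₂ * G.upsilon k * Q) * G.rho k ≤ (c₁ * k) * G.rho k by nlinarith [h1, hchain])
    exact this
  rw [show (c₁ / c₂ * k / G.upsilon k) = (c₁ * k) / (c₂ * G.upsilon k) from by
    field_simp]
  rw [le_div_iff₀ (by positivity)]
  nlinarith [h3, hQ0]
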